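/- Let A and B be n×n matrices over the nonnegative reals with λ > 0 and μ > 0, and suppose H(μ) ≤ λ. Then: (i) every positive vector x satisfies f_A(x) ≥ λ and f_B(x) ≥ μ; and (ii) there exists a positive vector x with f_A(x) = λ and f_B(x) = μ simultaneously. Consequently the Pareto frontier of the unconstrained bi-objective problem of minimizing (f_A(x), f_B(x)) over positive x is the single point (λ, μ). -/

import Mathlib

open scoped NNReal

/-- Square matrices over the max-times semifield of nonnegative reals. -/
abbrev TMat (n : ℕ) := Matrix (Fin n) (Fin n) ℝ≥0

/-- Tropical (max-times) matrix product. -/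
noncomputable def tmul {n : ℕ} (A B : TMat n) : TMat n :=
  fun i j => Finset.univ.sup fun k => A i k * B k j

/-- Tropical (max-times) matrix-vector product. -/
noncomputable def tmulVec {n : ℕ} (A : TMat n) (x : Fin n → ℝ≥0) : Fin n → ℝ≥0 :=
  fun i => Finset.univ.sup fun j => A i j * x j

/-- Tropical identity matrix. -/
noncomputable def tId (n : ℕ) : TMat n := fun i j => if i = j then 1 else 0

/-- Tropical matrix powers. -/
noncomputable def tpow {n : ℕ} (A : TMat n) : ℕ → TMat n
  | 0 => tId n
  | k + 1 => tmul A (tpow A k)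

/-- Tropical (entrywise max) matrix addition. -/
noncomputable def tadd {n : ℕ} (A B : TMat n) : TMat n := fun i j => A i j ⊔ B i j

/-- Entrywise scalar multiplication. -/
noncomputable def tsmul {n : ℕ} (a : ℝ≥0) (A : TMat n) : TMat n := fun i j => a * A i j

/-- Tropical trace: tr A = max_i a_{ii}. -/
noncomputable def ttr {n : ℕ} (A : TMat n) : ℝ≥0 := Finset.univ.sup fun i => A i i

/-- Tropical "determinant": Tr(A) = max_{k=1..n} tr(A^k). -/
noncomputable def tTr {n : ℕ} (A : TMat n) : ℝ≥0 :=
  (Finset.Icc 1 n).sup fun k => ttr (tpow A k)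

/-- Kleene star: entrywise max of A^0, ..., A^{n-1}. -/
noncomputable def tstar {n : ℕ} (A : TMat n) : TMat n :=
  fun i j => (Finset.range n).sup fun k => tpow A k i j

/-- Tropical product of a finite chain of matrices F 0 ⊗ F 1 ⊗ ⋯ ⊗ F (k-1). -/
noncomputable def tchain {n : ℕ} : (k : ℕ) → (Fin k → TMat n) → TMat n
  | 0, _ => tId n
  | k + 1, F => tmul (F 0) (tchain k fun t => F t.succ)

/-- Tuples of k nonnegative integers with sum m. -/
def tuples (k m : ℕ) : Finset (Fin k → Fin (m + 1)) :=
  Finset.univ.filter fun f => (∑ t, (f t : ℕ)) = m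

/-- Tuples of k integers from {0,1} with sum l. -/
def binTuples (k l : ℕ) : Finset (Fin k → Fin 2) :=
  Finset.univ.filter fun j => (∑ t, (j t : ℕ)) = l

/-- The objective f_M(x) = max_{i,j} m_{ij} x_j / x_i. -/
noncomputable def fobj {n : ℕ} (M : TMat n) (x : Fin n → ℝ≥0) : ℝ≥0 :=
  Finset.univ.sup fun p : Fin n × Fin n => M p.1 p.2 * x p.2 / x p.1

/-- Spectral radius: λ = max_{k=1..n} (tr(A^k))^{1/k}. -/
noncomputable def specRad {n : ℕ} (A : TMat n) : ℝ≥0 :=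
  (Finset.Icc 1 n).sup fun k => ttr (tpow A k) ^ ((1 : ℝ) / k)

/-- σ = max over k=1..n-1, m=1..n-k and tuples (i_1,…,i_k) with sum m of
    (tr(A^{i_1} C ⋯ A^{i_k} C))^{1/m}. -/
noncomputable def sigmaC {n : ℕ} (A C : TMat n) : ℝ≥0 :=
  (Finset.Icc 1 (n - 1)).sup fun k =>
    (Finset.Icc 1 (n - k)).sup fun m =>
      (tuples k m).sup fun f =>
        ttr (tchain k fun t => tmul (tpow A (f t : ℕ)) C) ^ ((1 : ℝ) / m)

/-- r_{k,l,m} = max over tuples (i_1,…,i_k) with sum m and (j_1,…,j_k) ∈ {0,1}^k with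
    sum l of tr(A^{i_1} B^{j_1} C^{1-j_1} ⋯ A^{i_k} B^{j_k} C^{1-j_k}). -/
noncomputable def rklm {n : ℕ} (A B C : TMat n) (k l m : ℕ) : ℝ≥0 :=
  (tuples k m).sup fun f =>
    (binTuples k l).sup fun j =>
      ttr (tchain k fun t =>
        tmul (tpow A (f t : ℕ)) (tmul (tpow B (j t : ℕ)) (tpow C (1 - (j t : ℕ)))))

/-- G(s) = max_{k,m,l} r_{k,l,m}^{1/l} s^{-m/l}. -/
noncomputable def Gfun {n : ℕ} (A B C : TMat n) (s : ℝ≥0) : ℝ≥0 :=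
  (Finset.Icc 1 (n - 1)).sup fun k =>
    (Finset.Icc 1 (n - k)).sup fun m =>
      (Finset.Icc 1 k).sup fun l =>
        rklm A B C k l m ^ ((1 : ℝ) / l) * s ^ (-(m : ℝ) / l)

/-- H(t) = max_{k,m,l} r_{k,l,m}^{1/m} t^{-l/m}. -/
noncomputable def Hfun {n : ℕ} (A B C : TMat n) (t : ℝ≥0) : ℝ≥0 :=
  (Finset.Icc 1 (n - 1)).sup fun k =>
    (Finset.Icc 1 (n - k)).sup fun m =>
      (Finset.Icc 1 k).sup fun l =>
        rklm A B C k l m ^ ((1 : ℝ) / m) * t ^ (-(l : ℝ) / m)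

/-- Unconstrained r_{k,m} = max over tuples (i_1,…,i_k) with sum m of
    tr(A^{i_1} B ⋯ A^{i_k} B). -/
noncomputable def rkm {n : ℕ} (A B : TMat n) (k m : ℕ) : ℝ≥0 :=
  (tuples k m).sup fun f => ttr (tchain k fun t => tmul (tpow A (f t : ℕ)) B)

/-- Unconstrained G(s) = max_{k,m} r_{k,m}^{1/k} s^{-m/k}. -/
noncomputable def Gfun0 {n : ℕ} (A B : TMat n) (s : ℝ≥0) : ℝ≥0 :=
  (Finset.Icc 1 (n - 1)).sup fun k =>
    (Finset.Icc 1 (n - k)).sup fun m =>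
      rkm A B k m ^ ((1 : ℝ) / k) * s ^ (-(m : ℝ) / k)

/-- Unconstrained H(t) = max_{k,m} r_{k,m}^{1/m} t^{-k/m}. -/
noncomputable def Hfun0 {n : ℕ} (A B : TMat n) (t : ℝ≥0) : ℝ≥0 :=
  (Finset.Icc 1 (n - 1)).sup fun k =>
    (Finset.Icc 1 (n - k)).sup fun m =>
      rkm A B k m ^ ((1 : ℝ) / m) * t ^ (-(k : ℝ) / m)

/-- Pareto-minimal points of a set V ⊆ ℝ≥0 × ℝ≥0. -/
def ParetoMin (V : Set (ℝ≥0 × ℝ≥0)) (p : ℝ≥0 × ℝ≥0) : Prop :=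
  p ∈ V ∧ ¬∃ q ∈ V, q.1 ≤ p.1 ∧ q.2 ≤ p.2 ∧ q ≠ p

/-- The set of objective values over positive vectors of the unconstrained problem. -/
def V0 {n : ℕ} (A B : TMat n) : Set (ℝ≥0 × ℝ≥0) :=
  {p | ∃ x : Fin n → ℝ≥0, (∀ i, 0 < x i) ∧ p = (fobj A x, fobj B x)}

/-!
(i) Entrywise `m_ij x_j ≤ f_M(x) x_i`, so every cycle of `M` of length `k` has weight at most
`f_M(x)^k`, whence `λ(M) ≤ f_M(x)`.

(ii) Let `C = λ⁻¹A ⊕ μ⁻¹B`. An entry of `C^k` is attained by a word in `A` and `B` with `m`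
letters `A` and `j` letters `B`, scaled by `λ^{-m} μ^{-j}`. A cyclic rotation, which does not
change the trace, brings a mixed word to the form `A^{i₁}B ⋯ A^{i_j}B`, whose trace is at most
`r_{j,m} ≤ λ^m μ^j` because `H(μ) ≤ λ`; pure words are bounded by the definitions of `λ` and
`μ`. So `tr(C^k) ≤ 1` for `k ≤ n`. Removing a cycle from a walk of length `n` then shows
`C^n ≤ C* = I ⊕ C ⊕ ⋯ ⊕ C^{n-1}`, so `C ⊗ C* ≤ C*` and the row maxima `x` of `C*` satisfy
`C x ≤ x`, that is `A x ≤ λ x` and `B x ≤ μ x`. Together with (i) this gives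
`f_A(x) = λ`, `f_B(x) = μ`, and `(λ, μ)` is the unique Pareto-minimal value.
-/

open Finset

section TropicalAlgebra

variable {n : ℕ}

lemma le_tmul (M N : TMat n) (i k j : Fin n) : M i k * N k j ≤ tmul M N i j :=
  le_sup (f := fun k => M i k * N k j) (mem_univ k)

lemma le_ttr (M : TMat n) (i : Fin n) : M i i ≤ ttr M :=
  le_sup (f := fun i => M i i) (mem_univ i)

lemma tmul_assoc (M N P : TMat n) : tmul (tmul M N) P = tmul M (tmul N P) := by
  funext i j
  simp only [tmul, NNReal.finset_sup_mul, NNReal.mul_finset_sup, mul_assoc]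
  exact Finset.sup_comm _ _ _

lemma tmul_tId (M : TMat n) : tmul M (tId n) = M := by
  funext i j
  refine le_antisymm (Finset.sup_le fun k _ => ?_) (by simpa [tId] using le_tmul M (tId n) i j j)
  by_cases h : k = j <;> simp [tId, h]

lemma tId_tmul (M : TMat n) : tmul (tId n) M = M := by
  funext i j
  refine le_antisymm (Finset.sup_le fun k _ => ?_) (by simpa [tId] using le_tmul (tId n) M i i j)
  by_cases h : i = k <;> simp [tId, h]

lemma ttr_tmul_comm (M N : TMat n) : ttr (tmul M N) = ttr (tmul N M) := by
  simp only [ttr, tmul]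
  rw [Finset.sup_comm]
  simp only [mul_comm]

lemma tpow_succ' (M : TMat n) (k : ℕ) : tpow M (k + 1) = tmul (tpow M k) M := by
  induction k with
  | zero => simp only [tpow, tmul_tId, tId_tmul]
  | succ k ih =>
    show tmul M (tpow M (k + 1)) = tmul (tmul M (tpow M k)) M
    rw [ih, tmul_assoc]

lemma tsmul_tmul (a : ℝ≥0) (M N : TMat n) : tmul (tsmul a M) N = tsmul a (tmul M N) := by
  funext i j
  simp only [tsmul, tmul, NNReal.mul_finset_sup, mul_assoc]

lemma tmul_tsmul (a : ℝ≥0) (M N : TMat n) : tmul M (tsmul a N) = tsmul a (tmul M N) := by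
  funext i j
  simp only [tsmul, tmul, NNReal.mul_finset_sup, mul_left_comm]

lemma tsmul_tsmul (a b : ℝ≥0) (M : TMat n) : tsmul a (tsmul b M) = tsmul (a * b) M := by
  funext i j
  simp only [tsmul, mul_assoc]

lemma tsmul_one (M : TMat n) : tsmul 1 M = M := by
  funext i j
  simp only [tsmul, one_mul]

lemma ttr_tsmul (a : ℝ≥0) (M : TMat n) : ttr (tsmul a M) = a * ttr M := by
  simp only [ttr, tsmul, NNReal.mul_finset_sup]

end TropicalAlgebra

section Objective

variable {n : ℕ} {M : TMat n} {x : Fin n → ℝ≥0}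

lemma fobj_le_iff (hx : ∀ i, 0 < x i) {t : ℝ≥0} :
    fobj M x ≤ t ↔ ∀ i j, M i j * x j ≤ t * x i := by
  simp only [fobj, Finset.sup_le_iff, mem_univ, true_implies, Prod.forall, div_le_iff₀ (hx _)]

lemma fobj_le_of_inv_mul_le (hx : ∀ i, 0 < x i) {t : ℝ≥0} (ht : t ≠ 0)
    (h : ∀ i j, t⁻¹ * M i j * x j ≤ x i) : fobj M x ≤ t :=
  (fobj_le_iff hx).mpr fun i j => by
    simpa [mul_assoc, ← mul_assoc t, mul_inv_cancel₀ ht] using mul_le_mul_right (h i j) t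

lemma tpow_mul_le_fobj_pow_mul (hx : ∀ i, 0 < x i) :
    ∀ (k : ℕ) (i j : Fin n), tpow M k i j * x j ≤ fobj M x ^ k * x i
  | 0, i, j => by by_cases h : i = j <;> simp [tpow, tId, h]
  | k + 1, i, j => by
    refine (NNReal.finset_sup_mul _ _ _).trans_le (Finset.sup_le fun l _ => ?_)
    calc M i l * tpow M k l j * x j ≤ M i l * (fobj M x ^ k * x l) := by
          rw [mul_assoc]; exact mul_le_mul_right (tpow_mul_le_fobj_pow_mul hx k l j) _
      _ = fobj M x ^ k * (M i l * x l) := by ring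
      _ ≤ fobj M x ^ k * (fobj M x * x i) :=
          mul_le_mul_right ((fobj_le_iff hx).mp le_rfl i l) _
      _ = fobj M x ^ (k + 1) * x i := by ring

lemma specRad_le_fobj (hx : ∀ i, 0 < x i) : specRad M ≤ fobj M x := by
  refine Finset.sup_le fun k hk => ?_
  have hk0 : (k : ℝ) ≠ 0 := Nat.cast_ne_zero.mpr (by simp at hk; omega)
  have htr : ttr (tpow M k) ≤ fobj M x ^ k :=
    Finset.sup_le fun i _ => le_of_mul_le_mul_right (tpow_mul_le_fobj_pow_mul hx k i i) (hx i)
  calc ttr (tpow M k) ^ ((1 : ℝ) / k) ≤ (fobj M x ^ k) ^ ((1 : ℝ) / k) :=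
        NNReal.rpow_le_rpow htr (by positivity)
    _ = fobj M x := by
        rw [← NNReal.rpow_natCast, ← NNReal.rpow_mul, mul_one_div, div_self hk0, NNReal.rpow_one]

end Objective

section Words

variable {n : ℕ}

noncomputable def tlistProd : List (TMat n) → TMat n
  | [] => tId n
  | M :: l => tmul M (tlistProd l)

lemma tlistProd_append (u v : List (TMat n)) :
    tlistProd (u ++ v) = tmul (tlistProd u) (tlistProd v) := by
  induction u with
  | nil => exact (tId_tmul _).symm
  | cons M u ih => rw [List.cons_append, tlistProd, tlistProd, ih, tmul_assoc]

lemma tlistProd_replicate (M : TMat n) : ∀ k, tlistProd (List.replicate k M) = tpow M k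
  | 0 => rfl
  | k + 1 => by rw [List.replicate_succ, tlistProd, tlistProd_replicate M k, tpow]

lemma tchain_eq_tlistProd :
    ∀ (k : ℕ) (F : Fin k → TMat n), tchain k F = tlistProd (List.ofFn F)
  | 0, _ => rfl
  | k + 1, F => by rw [List.ofFn_succ, tchain, tlistProd, tchain_eq_tlistProd k]

lemma ttr_tlistProd_append_comm (u v : List (TMat n)) :
    ttr (tlistProd (u ++ v)) = ttr (tlistProd (v ++ u)) := by
  rw [tlistProd_append, tlistProd_append, ttr_tmul_comm]

/-- The word in `A` and `B` spelled by `L`, with `true` standing for `B`. -/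
noncomputable def tword (A B : TMat n) (L : List Bool) : TMat n :=
  tlistProd (L.map fun b => bif b then B else A)

/-- The product `A^{f₁} B ⊗ ⋯ ⊗ A^{f_k} B` for `fs = [f₁, …, f_k]`. -/
noncomputable def tblocks (A B : TMat n) (fs : List ℕ) : TMat n :=
  tlistProd (fs.map fun f => tmul (tpow A f) B)

lemma exists_tword_ge_tpow_tadd (M N : TMat n) : ∀ (k : ℕ) (i j : Fin n),
    ∃ w : List Bool, w.length = k ∧ tpow (tadd M N) k i j ≤ tword M N w i j
  | 0, _, _ => ⟨[], rfl, le_rfl⟩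
  | k + 1, i, j => by
    obtain ⟨l, -, hl⟩ := exists_mem_eq_sup univ ⟨i, mem_univ i⟩
      fun l => tadd M N i l * tpow (tadd M N) k l j
    obtain ⟨w, hw, hle⟩ := exists_tword_ge_tpow_tadd M N k l j
    have hstep : ∀ b : Bool, (bif b then N else M) i l * tpow (tadd M N) k l j ≤
        tword M N (b :: w) i j := fun b =>
      (mul_le_mul_right hle _).trans (le_tmul _ _ i l j)
    refine ⟨decide (M i l ≤ N i l) :: w, by simp [hw], ?_⟩
    rw [show tpow (tadd M N) (k + 1) i j = _ from hl]
    refine le_trans (mul_le_mul_left ?_ _) (hstep _)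
    by_cases h : M i l ≤ N i l
    · simp [tadd, h]
    · simp [tadd, h, le_of_not_ge h]

lemma tword_tsmul (a b : ℝ≥0) (A B : TMat n) (L : List Bool) :
    tword (tsmul a A) (tsmul b B) L =
      tsmul (a ^ L.count false * b ^ L.count true) (tword A B L) := by
  induction L with
  | nil => simp [tword, tlistProd, tsmul_one]
  | cons c L ih =>
    simp only [tword, List.map_cons, tlistProd] at ih ⊢
    rw [ih]
    cases c <;> simp only [cond_false, cond_true, tsmul_tmul, tmul_tsmul, tsmul_tsmul] <;>
      congr 1 <;> simp [pow_succ] <;> ring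

lemma tword_append_singleton (A B : TMat n) (L : List Bool) (c : Bool) :
    tword A B (L ++ [c]) = tmul (tword A B L) (bif c then B else A) := by
  rw [tword, List.map_append, tlistProd_append, List.map_singleton, tlistProd, tlistProd,
    tmul_tId, tword]

lemma ttr_tword_append_comm (A B : TMat n) (u v : List Bool) :
    ttr (tword A B (u ++ v)) = ttr (tword A B (v ++ u)) := by
  simp only [tword, List.map_append]
  exact ttr_tlistProd_append_comm _ _

lemma tblocks_append_singleton (A B : TMat n) (fs : List ℕ) (e : ℕ) :
    tblocks A B (fs ++ [e]) = tmul (tblocks A B fs) (tmul (tpow A e) B) := by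
  rw [tblocks, List.map_append, tlistProd_append, List.map_singleton, tlistProd, tlistProd,
    tmul_tId, tblocks]

lemma exists_tword_eq_tblocks_tmul_tpow (A B : TMat n) (L : List Bool) :
    ∃ fs e, fs.length = L.count true ∧ fs.sum + e = L.count false ∧
      tword A B L = tmul (tblocks A B fs) (tpow A e) := by
  induction L using List.reverseRecOn with
  | nil => exact ⟨[], 0, rfl, rfl, (tmul_tId _).symm⟩
  | append_singleton L c ih =>
    obtain ⟨fs, e, hlen, hsum, hL⟩ := ih
    rw [tword_append_singleton, hL]
    cases c
    · refine ⟨fs, e + 1, by simpa using hlen, by simp [List.count_append]; omega, ?_⟩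
      rw [cond_false, tmul_assoc, ← tpow_succ']
    · refine ⟨fs ++ [e], 0, by simpa using hlen, by simp [List.count_append]; omega, ?_⟩
      rw [cond_true, tblocks_append_singleton, tmul_assoc, tpow, tmul_tId]

lemma ttr_tblocks_le_rkm (A B : TMat n) (fs : List ℕ) :
    ttr (tblocks A B fs) ≤ rkm A B fs.length fs.sum := by
  let f : Fin fs.length → Fin (fs.sum + 1) := fun t =>
    ⟨fs.get t, Nat.lt_succ_of_le (List.le_sum_of_mem (List.get_mem _ _))⟩
  have hf : f ∈ tuples fs.length fs.sum := by
    simp [tuples, f, ← List.sum_ofFn]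
  refine le_of_eq_of_le ?_
    (le_sup (f := fun g : Fin fs.length → Fin (fs.sum + 1) =>
      ttr (tchain _ fun t => tmul (tpow A (g t : ℕ)) B)) hf)
  rw [tchain_eq_tlistProd, tblocks]
  conv_lhs => rw [← List.ofFn_get fs, List.map_ofFn]
  rfl

lemma ttr_tword_le_rkm_of_true_mem (A B : TMat n) {L : List Bool} (ht : true ∈ L) :
    ttr (tword A B L) ≤ rkm A B (L.count true) (L.count false) := by
  obtain ⟨s, t, rfl⟩ := List.append_of_mem ht
  obtain ⟨fs, e, hlen, hsum, hst⟩ := exists_tword_eq_tblocks_tmul_tpow A B (t ++ s)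
  have hrot : ttr (tword A B (s ++ true :: t)) = ttr (tblocks A B (fs ++ [e])) := by
    rw [show s ++ true :: t = (s ++ [true]) ++ t by simp, ttr_tword_append_comm,
      ← List.append_assoc, tword_append_singleton, hst, cond_true, tblocks_append_singleton,
      tmul_assoc]
  have htrue : (s ++ true :: t).count true = (fs ++ [e]).length := by
    simp [List.count_append] at hlen ⊢; omega
  have hfalse : (s ++ true :: t).count false = (fs ++ [e]).sum := by
    simp [List.count_append] at hsum ⊢; omega
  rw [hrot, htrue, hfalse]
  exact ttr_tblocks_le_rkm A B _

end Words

section WordBounds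

variable {n : ℕ} {A B : TMat n} {a b : ℝ≥0}

lemma ttr_tword_le (hA : ∀ k, 1 ≤ k → k ≤ n → ttr (tpow A k) ≤ a ^ k)
    (hB : ∀ k, 1 ≤ k → k ≤ n → ttr (tpow B k) ≤ b ^ k)
    (hr : ∀ j m, 1 ≤ j → 1 ≤ m → j + m ≤ n → rkm A B j m ≤ a ^ m * b ^ j)
    {L : List Bool} (hL : L ≠ []) (hLn : L.length ≤ n) :
    ttr (tword A B L) ≤ a ^ L.count false * b ^ L.count true := by
  have hL1 : 1 ≤ L.length := List.length_pos_iff.mpr hL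
  by_cases ht : true ∈ L
  swap
  · have hrep : L = List.replicate L.length false :=
      List.eq_replicate_of_mem fun c hc => by cases c <;> simp_all
    rw [hrep]
    simpa [tword, tlistProd_replicate, List.count_replicate] using hA _ hL1 hLn
  by_cases hf : false ∈ L
  swap
  · have hrep : L = List.replicate L.length true :=
      List.eq_replicate_of_mem fun c hc => by cases c <;> simp_all
    rw [hrep]
    simpa [tword, tlistProd_replicate, List.count_replicate] using hB _ hL1 hLn
  have hlen := List.count_true_add_count_false L
  exact (ttr_tword_le_rkm_of_true_mem A B ht).trans
    (hr _ _ (List.count_pos_iff.mpr ht) (List.count_pos_iff.mpr hf) (by omega))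

lemma ttr_tpow_tadd_tsmul_inv_le_one (ha : a ≠ 0) (hb : b ≠ 0)
    {k : ℕ} (hword : ∀ L : List Bool, L.length = k →
      ttr (tword A B L) ≤ a ^ L.count false * b ^ L.count true) :
    ttr (tpow (tadd (tsmul a⁻¹ A) (tsmul b⁻¹ B)) k) ≤ 1 := by
  refine Finset.sup_le fun i _ => ?_
  obtain ⟨w, hw, hle⟩ := exists_tword_ge_tpow_tadd (tsmul a⁻¹ A) (tsmul b⁻¹ B) k i i
  calc tpow (tadd (tsmul a⁻¹ A) (tsmul b⁻¹ B)) k i i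
      ≤ ttr (tword (tsmul a⁻¹ A) (tsmul b⁻¹ B) w) := hle.trans (le_ttr _ i)
    _ = a⁻¹ ^ w.count false * b⁻¹ ^ w.count true * ttr (tword A B w) := by
        rw [tword_tsmul, ttr_tsmul]
    _ ≤ a⁻¹ ^ w.count false * b⁻¹ ^ w.count true * (a ^ w.count false * b ^ w.count true) :=
        mul_le_mul_right (hword w hw) _
    _ = 1 := by
        rw [inv_pow, inv_pow, mul_mul_mul_comm, inv_mul_cancel₀ (pow_ne_zero _ ha),
          inv_mul_cancel₀ (pow_ne_zero _ hb), one_mul]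

end WordBounds

lemma List.getLastD_append {α : Type*} (l₁ l₂ : List α) (d : α) :
    (l₁ ++ l₂).getLastD d = l₂.getLastD (l₁.getLastD d) := by
  induction l₁ generalizing d with
  | nil => rfl
  | cons x l₁ ih => simp only [List.cons_append, List.getLastD_cons, ih]

section KleeneStar

variable {n : ℕ} (C : TMat n)

/-- The walk starts at `i`, visits the vertices of `l` in order and ends at `l.getLastD i`. -/
noncomputable def walkWeight : Fin n → List (Fin n) → ℝ≥0
  | _, [] => 1
  | i, v :: l => C i v * walkWeight v l

lemma walkWeight_append (i : Fin n) (l₁ l₂ : List (Fin n)) :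
    walkWeight C i (l₁ ++ l₂) = walkWeight C i l₁ * walkWeight C (l₁.getLastD i) l₂ := by
  induction l₁ generalizing i with
  | nil => simp [walkWeight]
  | cons v l₁ ih => simp only [List.cons_append, walkWeight, ih, List.getLastD_cons, mul_assoc]

lemma walkWeight_le_tpow (i : Fin n) (l : List (Fin n)) :
    walkWeight C i l ≤ tpow C l.length i (l.getLastD i) := by
  induction l generalizing i with
  | nil => simp [walkWeight, tpow, tId]
  | cons v l ih =>
    rw [walkWeight, List.getLastD_cons, List.length_cons]
    exact (mul_le_mul_right (ih v) _).trans (le_tmul _ _ _ _ _)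

lemma exists_walk_of_tpow_ne_zero :
    ∀ {k : ℕ} {i j : Fin n}, tpow C k i j ≠ 0 →
      ∃ l : List (Fin n), l.length = k ∧ l.getLastD i = j ∧ tpow C k i j ≤ walkWeight C i l
  | 0, i, j, h => by
    by_cases hij : i = j
    · exact ⟨[], rfl, hij, by simp [tpow, tId, walkWeight, hij]⟩
    · simp [tpow, tId, hij] at h
  | k + 1, i, j, h => by
    obtain ⟨v, -, hv⟩ := exists_mem_eq_sup univ ⟨i, mem_univ i⟩ fun v => C i v * tpow C k v j
    have hv : tpow C (k + 1) i j = C i v * tpow C k v j := hv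
    obtain ⟨l, hlen, hlast, hle⟩ := exists_walk_of_tpow_ne_zero (right_ne_zero_of_mul (hv ▸ h))
    refine ⟨v :: l, by simp [hlen], by rwa [List.getLastD_cons], ?_⟩
    rw [hv, walkWeight]
    exact mul_le_mul_right hle _

/-- Pigeonhole on the endpoints of the `n + 1` prefixes `l.take p`, `p ≤ n`. -/
lemma exists_closed_subwalk (i : Fin n) (l : List (Fin n)) (hl : n ≤ l.length) :
    ∃ l₁ l₂ l₃ : List (Fin n), l = l₁ ++ l₂ ++ l₃ ∧ l₂ ≠ [] ∧
      l₂.getLastD (l₁.getLastD i) = l₁.getLastD i := by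
  let f : Fin (n + 1) → Fin n := fun p => (l.take p).getLastD i
  obtain ⟨p, q, hpq, hfpq⟩ : ∃ p q : Fin (n + 1), p < q ∧ f p = f q := by
    obtain ⟨p, q, hne, hf⟩ := Fintype.exists_ne_map_eq_of_card_lt f (by simp)
    rcases lt_or_gt_of_ne hne with h | h
    exacts [⟨p, q, h, hf⟩, ⟨q, p, h, hf.symm⟩]
  have htake : l.take q = l.take p ++ (l.drop p).take (q - p) := by
    rw [← List.take_add, Nat.add_sub_cancel' hpq.le]
  refine ⟨l.take p, (l.drop p).take (q - p), l.drop q, ?_, ?_, ?_⟩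
  · rw [← htake, List.take_append_drop]
  · simp only [ne_eq, List.take_eq_nil_iff, List.drop_eq_nil_iff, not_or]
    omega
  · rw [← List.getLastD_append, ← htake]
    exact hfpq.symm

variable {C}

lemma tpow_le_tstar_of_ttr_le_one (htr : ∀ k, 1 ≤ k → k ≤ n → ttr (tpow C k) ≤ 1)
    (i j : Fin n) : tpow C n i j ≤ tstar C i j := by
  by_cases h0 : tpow C n i j = 0
  · rw [h0]; exact zero_le
  obtain ⟨l, hlen, hlast, hle⟩ := exists_walk_of_tpow_ne_zero C h0
  obtain ⟨l₁, l₂, l₃, rfl, hl₂, hcyc⟩ := exists_closed_subwalk i l hlen.ge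
  set v := l₁.getLastD i
  simp only [List.length_append] at hlen
  have hl₂len : 1 ≤ l₂.length := List.length_pos_iff.mpr hl₂
  have hcycle : walkWeight C v l₂ ≤ 1 := by
    have h := walkWeight_le_tpow C v l₂
    rw [hcyc] at h
    exact h.trans ((le_ttr _ v).trans (htr _ hl₂len (by omega)))
  have hend : (l₁ ++ l₃).getLastD i = j := by
    rw [← hlast, List.getLastD_append, List.getLastD_append, List.getLastD_append, hcyc]
  have hshort : (l₁ ++ l₃).length < n := by simp only [List.length_append]; omega
  calc tpow C n i j ≤ walkWeight C i (l₁ ++ l₂ ++ l₃) := hle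
    _ = walkWeight C i l₁ * walkWeight C v l₂ * walkWeight C v l₃ := by
        rw [walkWeight_append, walkWeight_append, List.getLastD_append, hcyc]
    _ ≤ walkWeight C i l₁ * 1 * walkWeight C v l₃ := by gcongr
    _ = walkWeight C i (l₁ ++ l₃) := by rw [mul_one, walkWeight_append]
    _ ≤ tpow C (l₁ ++ l₃).length i j := hend ▸ walkWeight_le_tpow C i _
    _ ≤ tstar C i j := le_sup (f := fun k => tpow C k i j) (mem_range.mpr hshort)

lemma mul_tstar_le (htr : ∀ k, 1 ≤ k → k ≤ n → ttr (tpow C k) ≤ 1) (i j l : Fin n) :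
    C i j * tstar C j l ≤ tstar C i l := by
  rw [tstar, NNReal.mul_finset_sup]
  refine Finset.sup_le fun k hk => (le_tmul C (tpow C k) i j l).trans ?_
  change tpow C (k + 1) i l ≤ tstar C i l
  rcases Nat.lt_or_ge (k + 1) n with h | h
  · exact le_sup (f := fun k => tpow C k i l) (mem_range.mpr h)
  · obtain rfl : k + 1 = n := le_antisymm (mem_range.mp hk) h
    exact tpow_le_tstar_of_ttr_le_one htr i l

/-- The row maxima of the Kleene star form a positive subeigenvector. -/
lemma exists_pos_forall_mul_le (htr : ∀ k, 1 ≤ k → k ≤ n → ttr (tpow C k) ≤ 1) :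
    ∃ x : Fin n → ℝ≥0, (∀ i, 0 < x i) ∧ ∀ i j, C i j * x j ≤ x i := by
  refine ⟨fun i => univ.sup (tstar C i), fun i => ?_, fun i j => ?_⟩
  · have hdiag : 1 ≤ tstar C i i := by
      have h : tpow C 0 i i ≤ tstar C i i :=
        le_sup (f := fun k => tpow C k i i) (mem_range.mpr i.pos)
      rwa [show tpow C 0 i i = 1 by simp [tpow, tId]] at h
    exact one_pos.trans_le (hdiag.trans (le_sup (f := tstar C i) (mem_univ i)))
  · rw [NNReal.mul_finset_sup]
    exact Finset.sup_le fun l _ =>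
      (mul_tstar_le htr i j l).trans (le_sup (f := tstar C i) (mem_univ l))

end KleeneStar

section SpectralBounds

variable {n : ℕ} {A B : TMat n}

lemma ttr_tpow_le_specRad_pow (k : ℕ) (hk1 : 1 ≤ k) (hkn : k ≤ n) :
    ttr (tpow A k) ≤ specRad A ^ k := by
  have hk0 : (k : ℝ) ≠ 0 := Nat.cast_ne_zero.mpr (by omega)
  have h : ttr (tpow A k) ^ ((1 : ℝ) / k) ≤ specRad A :=
    le_sup (f := fun k => ttr (tpow A k) ^ ((1 : ℝ) / k)) (mem_Icc.mpr ⟨hk1, hkn⟩)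
  calc ttr (tpow A k) = (ttr (tpow A k) ^ ((1 : ℝ) / k)) ^ (k : ℝ) := by
        rw [← NNReal.rpow_mul, one_div, inv_mul_cancel₀ hk0, NNReal.rpow_one]
    _ ≤ specRad A ^ (k : ℝ) := NNReal.rpow_le_rpow h (by positivity)
    _ = specRad A ^ k := NNReal.rpow_natCast _ _

lemma rkm_le_of_Hfun0_le (hmu : specRad B ≠ 0) (hH : Hfun0 A B (specRad B) ≤ specRad A)
    (j m : ℕ) (hj : 1 ≤ j) (hm : 1 ≤ m) (hjm : j + m ≤ n) :
    rkm A B j m ≤ specRad A ^ m * specRad B ^ j := by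
  set lam := specRad A
  set mu := specRad B
  have hm0 : (m : ℝ) ≠ 0 := Nat.cast_ne_zero.mpr (by omega)
  have hterm : rkm A B j m ^ ((1 : ℝ) / m) * mu ^ (-(j : ℝ) / m) ≤ lam :=
    le_trans (le_trans
      (le_sup (f := fun m => rkm A B j m ^ ((1 : ℝ) / m) * mu ^ (-(j : ℝ) / m))
        (mem_Icc.mpr ⟨hm, by omega⟩))
      (le_sup (f := fun k => (Icc 1 (n - k)).sup fun m =>
          rkm A B k m ^ ((1 : ℝ) / m) * mu ^ (-(k : ℝ) / m))
        (mem_Icc.mpr ⟨hj, by omega⟩))) hH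
  have hroot : rkm A B j m ^ ((1 : ℝ) / m) ≤ lam * mu ^ ((j : ℝ) / m) := by
    rw [neg_div, NNReal.rpow_neg, ← div_eq_mul_inv] at hterm
    exact (div_le_iff₀ (NNReal.rpow_pos (pos_iff_ne_zero.mpr hmu))).mp hterm
  calc rkm A B j m = (rkm A B j m ^ ((1 : ℝ) / m)) ^ (m : ℝ) := by
        rw [← NNReal.rpow_mul, one_div, inv_mul_cancel₀ hm0, NNReal.rpow_one]
    _ ≤ (lam * mu ^ ((j : ℝ) / m)) ^ (m : ℝ) := NNReal.rpow_le_rpow hroot (by positivity)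
    _ = lam ^ m * mu ^ j := by
        rw [NNReal.mul_rpow, NNReal.rpow_natCast, ← NNReal.rpow_mul, div_mul_cancel₀ _ hm0,
          NNReal.rpow_natCast]

end SpectralBounds

lemma setOf_paretoMin_eq_singleton {V : Set (ℝ≥0 × ℝ≥0)} {p : ℝ≥0 × ℝ≥0} (hp : p ∈ V)
    (hmin : ∀ q ∈ V, p.1 ≤ q.1 ∧ p.2 ≤ q.2) : {q | ParetoMin V q} = {p} := by
  ext q
  simp only [Set.mem_ofPred_eq, Set.mem_singleton_iff, ParetoMin]
  constructor
  · rintro ⟨hq, hdom⟩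
    by_contra hne
    exact hdom ⟨p, hp, (hmin q hq).1, (hmin q hq).2, fun h => hne h.symm⟩
  · rintro rfl
    exact ⟨hp, fun ⟨q, hq, h1, h2, hne⟩ =>
      hne (Prod.ext (h1.antisymm (hmin q hq).1) (h2.antisymm (hmin q hq).2))⟩

/-- Unconstrained case with H(μ) ≤ λ: (i) every positive x satisfies f_A(x) ≥ λ and
f_B(x) ≥ μ; (ii) some positive x attains both; consequently the Pareto frontier of the
unconstrained bi-objective problem is the single point (λ, μ). -/
theorem stmt17 {n : ℕ} (A B : TMat n)
    (hlam : 0 < specRad A) (hmu : 0 < specRad B)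
    (hH : Hfun0 A B (specRad B) ≤ specRad A) :
    (∀ x : Fin n → ℝ≥0, (∀ i, 0 < x i) →
        specRad A ≤ fobj A x ∧ specRad B ≤ fobj B x) ∧
    (∃ x : Fin n → ℝ≥0, (∀ i, 0 < x i) ∧
        fobj A x = specRad A ∧ fobj B x = specRad B) ∧
    {p | ParetoMin (V0 A B) p} = {(specRad A, specRad B)} := by
  have lower : ∀ x : Fin n → ℝ≥0, (∀ i, 0 < x i) →
      specRad A ≤ fobj A x ∧ specRad B ≤ fobj B x :=
    fun x hx => ⟨specRad_le_fobj hx, specRad_le_fobj hx⟩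
  have htr : ∀ k, 1 ≤ k → k ≤ n →
      ttr (tpow (tadd (tsmul (specRad A)⁻¹ A) (tsmul (specRad B)⁻¹ B)) k) ≤ 1 :=
    fun k hk hkn => ttr_tpow_tadd_tsmul_inv_le_one hlam.ne' hmu.ne' fun L hL =>
      ttr_tword_le ttr_tpow_le_specRad_pow ttr_tpow_le_specRad_pow
        (rkm_le_of_Hfun0_le hmu.ne' hH) (List.ne_nil_of_length_pos (by omega)) (by omega)
  obtain ⟨x, hx, hCx⟩ := exists_pos_forall_mul_le htr
  have hA : fobj A x = specRad A := (fobj_le_of_inv_mul_le hx hlam.ne' fun i j =>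
    (mul_le_mul_left le_sup_left _).trans (hCx i j)).antisymm (lower x hx).1
  have hB : fobj B x = specRad B := (fobj_le_of_inv_mul_le hx hmu.ne' fun i j =>
    (mul_le_mul_left le_sup_right _).trans (hCx i j)).antisymm (lower x hx).2
  refine ⟨lower, ⟨x, hx, hA, hB⟩, setOf_paretoMin_eq_singleton ⟨x, hx, by rw [hA, hB]⟩ ?_⟩
  rintro _ ⟨y, hy, rfl⟩
  exact lower y hy
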